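/- Let A ∈ ℂ^n be nonzero and Γ ∈ ℂ^n with components Γ_i = J_i + iS_i (J_i, S_i real). Define G_i = Γ_i A_i, the weighted mean ⟨x⟩ = (∑_i x_i|A_i|²)/(∑_i |A_i|²) for x ∈ ℝ^n, Var(x) = ⟨x²⟩ − ⟨x⟩², and V(Γ) = √(⟨J⟩² + Var(J) + Var(S)). Then the two nonzero eigenvalues of χ = |A⟩⟨G| + |G⟩⟨A| are λ± = ‖A‖²(⟨J⟩ ± V(Γ)). -/

import Mathlib

open Matrix

/-- The matrix `χ = |A⟩⟨G| + |G⟩⟨A|`. -/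
noncomputable def dyadSum {n : ℕ} (A G : Fin n → ℂ) : Matrix (Fin n) (Fin n) ℂ :=
  Matrix.of fun i j => A i * star (G j) + G i * star (A j)

/-- `‖A‖² = ∑ |A_i|²`. -/
noncomputable def nrmSq {n : ℕ} (A : Fin n → ℂ) : ℝ := ∑ i, Complex.normSq (A i)

/-- Weighted mean `⟨x⟩ = (∑ x_i |A_i|²)/(∑ |A_i|²)`. -/
noncomputable def wmean {n : ℕ} (A : Fin n → ℂ) (x : Fin n → ℝ) : ℝ :=
  (∑ i, x i * Complex.normSq (A i)) / nrmSq A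

/-- `Var(x) = ⟨x²⟩ − ⟨x⟩²`. -/
noncomputable def wvar {n : ℕ} (A : Fin n → ℂ) (x : Fin n → ℝ) : ℝ :=
  wmean A (fun i => x i ^ 2) - (wmean A x) ^ 2

/-- `V(Γ) = √(⟨J⟩² + Var(J) + Var(S))`. -/
noncomputable def vGamma {n : ℕ} (A Γ : Fin n → ℂ) : ℝ :=
  Real.sqrt ((wmean A fun i => (Γ i).re) ^ 2 +
    wvar A (fun i => (Γ i).re) + wvar A (fun i => (Γ i).im))

/-! With `z = ⟨A, G⟩`, the operator `χ v = ⟨G, v⟩ A + ⟨A, v⟩ G` maps everything into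
`span {A, G}`. For an eigenvector `v` with eigenvalue `μ ≠ 0`, the pair `(⟨G, v⟩, ⟨A, v⟩)` is a
nonzero kernel vector of the `2 × 2` matrix `[[μ - z̄, -‖G‖²], [-‖A‖², μ - z]]`, so
`(μ - z̄)(μ - z) = ‖A‖²‖G‖²`, i.e. `μ = Re z ± √(‖A‖²‖G‖² - (Im z)²)`, the discriminant being
nonnegative by Cauchy–Schwarz; conversely `(μ - z) A + ‖A‖² G` is an eigenvector for each root.
For `G_i = Γ_i A_i` one has `z = ∑ Γ_i |A_i|²` and `‖G‖² = ∑ |Γ_i|² |A_i|²`, which turns `Re z`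
into `‖A‖² ⟨J⟩` and the discriminant into `‖A‖⁴ V(Γ)²`. -/

open ComplexConjugate

section Dyad

variable {n : ℕ}

lemma star_dotProduct_self (A : Fin n → ℂ) : star A ⬝ᵥ A = (nrmSq A : ℂ) := by
  simp [nrmSq, dotProduct, Complex.normSq_eq_conj_mul_self]

lemma nrmSq_eq_norm_sq (A : Fin n → ℂ) : nrmSq A = ‖WithLp.toLp 2 A‖ ^ 2 := by
  simp [EuclideanSpace.norm_sq_eq, nrmSq, Complex.normSq_eq_norm_sq]

lemma nrmSq_pos {A : Fin n → ℂ} (hA : A ≠ 0) : 0 < nrmSq A := by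
  rw [nrmSq_eq_norm_sq]
  exact pow_pos (norm_pos_iff.2 (by simpa using hA)) 2

lemma normSq_star_dotProduct_le (A G : Fin n → ℂ) :
    Complex.normSq (star A ⬝ᵥ G) ≤ nrmSq A * nrmSq G := by
  have h := norm_inner_le_norm (𝕜 := ℂ) (WithLp.toLp 2 A) (WithLp.toLp 2 G)
  rw [EuclideanSpace.inner_toLp_toLp, dotProduct_comm] at h
  rw [Complex.normSq_eq_norm_sq, nrmSq_eq_norm_sq, nrmSq_eq_norm_sq, ← mul_pow]
  gcongr

lemma dyadSum_mulVec (A G v : Fin n → ℂ) :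
    dyadSum A G *ᵥ v = (star G ⬝ᵥ v) • A + (star A ⬝ᵥ v) • G := by
  ext i
  simp only [dyadSum, mulVec, dotProduct, of_apply, Pi.add_apply, Pi.smul_apply, smul_eq_mul,
    Pi.star_apply, add_mul, Finset.sum_add_distrib, Finset.sum_mul]
  congr 1 <;> exact Finset.sum_congr rfl fun j _ => by ring

lemma star_dotProduct_swap (A G : Fin n → ℂ) : star G ⬝ᵥ A = conj (star A ⬝ᵥ G) := by
  rw [star_dotProduct]; rfl

lemma dyadSum_mulVec_of_sub_conj_mul_sub_eq (A G : Fin n → ℂ) {μ : ℂ}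
    (hμ : (μ - conj (star A ⬝ᵥ G)) * (μ - star A ⬝ᵥ G) = nrmSq A * nrmSq G) :
    dyadSum A G *ᵥ ((μ - star A ⬝ᵥ G) • A + (nrmSq A : ℂ) • G) =
      μ • ((μ - star A ⬝ᵥ G) • A + (nrmSq A : ℂ) • G) := by
  rw [dyadSum_mulVec, dotProduct_add, dotProduct_add, dotProduct_smul, dotProduct_smul,
    dotProduct_smul, dotProduct_smul, star_dotProduct_self A, star_dotProduct_self G,
    star_dotProduct_swap A G, smul_add, smul_smul, smul_smul]
  simp only [smul_eq_mul]
  congr 2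
  · linear_combination -hμ
  · ring

lemma sub_conj_mul_sub_eq_of_dyadSum_mulVec (A G : Fin n → ℂ) {μ : ℂ} {v : Fin n → ℂ}
    (hμ : μ ≠ 0) (hv : v ≠ 0) (h : dyadSum A G *ᵥ v = μ • v) :
    (μ - conj (star A ⬝ᵥ G)) * (μ - star A ⬝ᵥ G) = nrmSq A * nrmSq G := by
  rw [dyadSum_mulVec] at h
  set s := star G ⬝ᵥ v
  set t := star A ⬝ᵥ v
  have hs : μ * s = s * conj (star A ⬝ᵥ G) + t * nrmSq G := by
    have := congrArg (star G ⬝ᵥ ·) h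
    simp only [dotProduct_add, dotProduct_smul, smul_eq_mul, star_dotProduct_self,
      star_dotProduct_swap A G] at this
    linear_combination -this
  have ht : μ * t = s * nrmSq A + t * star A ⬝ᵥ G := by
    have := congrArg (star A ⬝ᵥ ·) h
    simp only [dotProduct_add, dotProduct_smul, smul_eq_mul, star_dotProduct_self] at this
    linear_combination -this
  have hst : s ≠ 0 ∨ t ≠ 0 := by
    by_contra! h0
    rw [h0.1, h0.2, zero_smul, zero_smul, add_zero, eq_comm, smul_eq_zero] at h
    exact h.elim hμ hv
  rw [← sub_eq_zero]
  rcases hst with hs0 | ht0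
  · refine (mul_eq_zero.1 ?_).resolve_right hs0
    linear_combination (μ - star A ⬝ᵥ G) * hs + nrmSq G * ht
  · refine (mul_eq_zero.1 ?_).resolve_right ht0
    linear_combination (μ - conj (star A ⬝ᵥ G)) * ht + nrmSq A * hs

lemma sub_conj_mul_sub_eq_iff (z : ℂ) {D : ℝ} (hD : 0 ≤ D) (μ : ℂ) :
    (μ - conj z) * (μ - z) = D + z.im ^ 2 ↔
      μ = ((z.re + √D : ℝ) : ℂ) ∨ μ = ((z.re - √D : ℝ) : ℂ) := by
  have hsq : ((√D : ℝ) : ℂ) ^ 2 = D := by exact_mod_cast Real.sq_sqrt hD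
  have hfactor : (μ - conj z) * (μ - z) - (D + z.im ^ 2) =
      (μ - ((z.re + √D : ℝ) : ℂ)) * (μ - ((z.re - √D : ℝ) : ℂ)) := by
    obtain ⟨x, y⟩ := z
    simp only [Complex.mk_eq_add_mul_I, map_add, map_mul, Complex.conj_ofReal, Complex.conj_I]
    push_cast
    linear_combination hsq - y ^ 2 * Complex.I_sq
  rw [← sub_eq_zero, hfactor, mul_eq_zero, sub_eq_zero, sub_eq_zero]

noncomputable def dyadDisc (A G : Fin n → ℂ) : ℝ :=
  nrmSq A * nrmSq G - (star A ⬝ᵥ G).im ^ 2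

lemma dyadDisc_nonneg (A G : Fin n → ℂ) : 0 ≤ dyadDisc A G := by
  have h := normSq_star_dotProduct_le A G
  rw [Complex.normSq_apply] at h
  unfold dyadDisc
  nlinarith [mul_self_nonneg (star A ⬝ᵥ G).re]

lemma sub_conj_mul_sub_eq_iff_dyadDisc (A G : Fin n → ℂ) (μ : ℂ) :
    (μ - conj (star A ⬝ᵥ G)) * (μ - star A ⬝ᵥ G) = nrmSq A * nrmSq G ↔
      μ = (((star A ⬝ᵥ G).re + √(dyadDisc A G) : ℝ) : ℂ) ∨
        μ = (((star A ⬝ᵥ G).re - √(dyadDisc A G) : ℝ) : ℂ) := by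
  rw [← sub_conj_mul_sub_eq_iff _ (dyadDisc_nonneg A G), dyadDisc]
  push_cast
  ring_nf

theorem exists_dyadSum_mulVec_eq_smul {A G : Fin n → ℂ} (hAG : LinearIndependent ℂ ![A, G])
    {μ : ℂ} (hμ : μ = (((star A ⬝ᵥ G).re + √(dyadDisc A G) : ℝ) : ℂ) ∨
      μ = (((star A ⬝ᵥ G).re - √(dyadDisc A G) : ℝ) : ℂ)) :
    ∃ v : Fin n → ℂ, v ≠ 0 ∧ dyadSum A G *ᵥ v = μ • v := by
  refine ⟨_, fun h0 => ?_, dyadSum_mulVec_of_sub_conj_mul_sub_eq A G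
    ((sub_conj_mul_sub_eq_iff_dyadDisc A G μ).2 hμ)⟩
  have hA : (nrmSq A : ℂ) ≠ 0 := by
    exact_mod_cast (nrmSq_pos (by simpa using hAG.ne_zero 0)).ne'
  exact hA (LinearIndependent.pair_iff.1 hAG _ _ h0).2

theorem eq_of_dyadSum_mulVec_eq_smul {A G v : Fin n → ℂ} {μ : ℂ} (hμ : μ ≠ 0) (hv : v ≠ 0)
    (h : dyadSum A G *ᵥ v = μ • v) :
    μ = (((star A ⬝ᵥ G).re + √(dyadDisc A G) : ℝ) : ℂ) ∨
      μ = (((star A ⬝ᵥ G).re - √(dyadDisc A G) : ℝ) : ℂ) :=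
  (sub_conj_mul_sub_eq_iff_dyadDisc A G μ).1 (sub_conj_mul_sub_eq_of_dyadSum_mulVec A G hμ hv h)

end Dyad

section Weighted

variable {n : ℕ}

lemma nrmSq_mul_wmean {A : Fin n → ℂ} (hA : nrmSq A ≠ 0) (x : Fin n → ℝ) :
    nrmSq A * wmean A x = ∑ i, x i * Complex.normSq (A i) :=
  mul_div_cancel₀ _ hA

lemma nrmSq_sq_mul_wmean_sq_add_wvar_add_wvar {A : Fin n → ℂ} (hA : nrmSq A ≠ 0)
    (x y : Fin n → ℝ) :
    nrmSq A ^ 2 * (wmean A x ^ 2 + wvar A x + wvar A y) =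
      nrmSq A * ∑ i, (x i ^ 2 + y i ^ 2) * Complex.normSq (A i) -
        (∑ i, y i * Complex.normSq (A i)) ^ 2 := by
  have hmean (z : Fin n → ℝ) : wmean A z = (∑ i, z i * Complex.normSq (A i)) / nrmSq A := rfl
  simp only [wvar, hmean, add_mul, Finset.sum_add_distrib]
  field_simp
  ring

variable {A Γ G : Fin n → ℂ}

lemma star_dotProduct_eq_sum (hG : ∀ i, G i = Γ i * A i) :
    star A ⬝ᵥ G = ∑ i, Γ i * Complex.normSq (A i) := by
  refine Finset.sum_congr rfl fun i _ => ?_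
  rw [hG, Pi.star_apply, Complex.star_def, Complex.normSq_eq_conj_mul_self]
  ring

lemma nrmSq_eq_sum (hG : ∀ i, G i = Γ i * A i) :
    nrmSq G = ∑ i, ((Γ i).re ^ 2 + (Γ i).im ^ 2) * Complex.normSq (A i) := by
  refine Finset.sum_congr rfl fun i _ => ?_
  rw [hG, Complex.normSq_mul, Complex.normSq_apply]
  ring

lemma re_star_dotProduct_eq (hA : nrmSq A ≠ 0) (hG : ∀ i, G i = Γ i * A i) :
    (star A ⬝ᵥ G).re = nrmSq A * wmean A fun i => (Γ i).re := by
  rw [nrmSq_mul_wmean hA, star_dotProduct_eq_sum hG, Complex.re_sum]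
  simp

lemma sqrt_dyadDisc_eq (hA : 0 < nrmSq A) (hG : ∀ i, G i = Γ i * A i) :
    √(dyadDisc A G) = nrmSq A * vGamma A Γ := by
  have hDisc : dyadDisc A G = nrmSq A ^ 2 * ((wmean A fun i => (Γ i).re) ^ 2 +
      wvar A (fun i => (Γ i).re) + wvar A (fun i => (Γ i).im)) := by
    rw [nrmSq_sq_mul_wmean_sq_add_wvar_add_wvar hA.ne', dyadDisc, nrmSq_eq_sum hG,
      star_dotProduct_eq_sum hG, Complex.im_sum]
    simp
  rw [hDisc, Real.sqrt_mul (sq_nonneg _), Real.sqrt_sq hA.le, vGamma]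

end Weighted

theorem stmt_11_general {n : ℕ} (A Γ G : Fin n → ℂ)
    (hG : ∀ i, G i = Γ i * A i) (hAG : LinearIndependent ℂ ![A, G]) :
    (∀ lam : ℝ,
      (lam = nrmSq A * ((wmean A fun i => (Γ i).re) + vGamma A Γ) ∨
       lam = nrmSq A * ((wmean A fun i => (Γ i).re) - vGamma A Γ)) →
      ∃ v : Fin n → ℂ, v ≠ 0 ∧ (dyadSum A G).mulVec v = (lam : ℂ) • v) ∧
    (∀ μ : ℂ, μ ≠ 0 → (∃ v : Fin n → ℂ, v ≠ 0 ∧ (dyadSum A G).mulVec v = μ • v) →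
      (μ = ((nrmSq A * ((wmean A fun i => (Γ i).re) + vGamma A Γ) : ℝ) : ℂ) ∨
       μ = ((nrmSq A * ((wmean A fun i => (Γ i).re) - vGamma A Γ) : ℝ) : ℂ))) := by
  have hp : 0 < nrmSq A := nrmSq_pos (by simpa using hAG.ne_zero 0)
  have hplus : nrmSq A * ((wmean A fun i => (Γ i).re) + vGamma A Γ) =
      (star A ⬝ᵥ G).re + √(dyadDisc A G) := by
    rw [mul_add, re_star_dotProduct_eq hp.ne' hG, sqrt_dyadDisc_eq hp hG]
  have hminus : nrmSq A * ((wmean A fun i => (Γ i).re) - vGamma A Γ) =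
      (star A ⬝ᵥ G).re - √(dyadDisc A G) := by
    rw [mul_sub, re_star_dotProduct_eq hp.ne' hG, sqrt_dyadDisc_eq hp hG]
  rw [hplus, hminus]
  exact ⟨fun lam hlam => exists_dyadSum_mulVec_eq_smul hAG (by exact_mod_cast hlam),
    fun μ hμ ⟨v, hv, h⟩ => eq_of_dyadSum_mulVec_eq_smul hμ hv h⟩

/-- With `G_i = Γ_i A_i`, the two nonzero eigenvalues of `χ = |A⟩⟨G| + |G⟩⟨A|` are
`λ± = ‖A‖²(⟨J⟩ ± V(Γ))`. -/
theorem stmt_11 {n : ℕ} (A Γ G : Fin n → ℂ) (hA : A ≠ 0)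
    (hG : ∀ i, G i = Γ i * A i) (hAG : LinearIndependent ℂ ![A, G]) :
    (∀ lam : ℝ,
      (lam = nrmSq A * ((wmean A fun i => (Γ i).re) + vGamma A Γ) ∨
       lam = nrmSq A * ((wmean A fun i => (Γ i).re) - vGamma A Γ)) →
      ∃ v : Fin n → ℂ, v ≠ 0 ∧ (dyadSum A G).mulVec v = (lam : ℂ) • v) ∧
    (∀ μ : ℂ, μ ≠ 0 → (∃ v : Fin n → ℂ, v ≠ 0 ∧ (dyadSum A G).mulVec v = μ • v) →
      (μ = ((nrmSq A * ((wmean A fun i => (Γ i).re) + vGamma A Γ) : ℝ) : ℂ) ∨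
       μ = ((nrmSq A * ((wmean A fun i => (Γ i).re) - vGamma A Γ) : ℝ) : ℂ))) :=
  stmt_11_general A Γ G hG hAG
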